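/- For every integer n ≥ 1 and every ω ∈ [0, 2π), the density φ_{2,n}(ω′) = sin(nω′)/Ξ(ω′) satisfies K*[φ_{2,n}](ω) = −(1/(2 e^{2nρ₀})) · sin(nω)/Ξ(ω); explicitly, (1/2π) ∫₀^{2π} (⟨x(ω) − x(ω′), ν(ω)⟩ / |x(ω) − x(ω′)|²) · sin(nω′) dω′ = −sin(nω) / (2 e^{2nρ₀} Ξ(ω)). That is, φ_{2,n} is an eigenfunction of the Neumann–Poincaré operator of the ellipse with eigenvalue −aₙ = −1/(2 e^{2nρ₀}). -/

import Mathlib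

/-!
On the ellipse, `|x(ω) - x(ω')|² = R₀² (1 - cos (ω - ω')) (cosh 2ρ₀ - cos (ω + ω'))` and
`⟨x(ω) - x(ω'), Ξ(ω) ν(ω)⟩ = R₀² (sinh 2ρ₀ / 2) (1 - cos (ω - ω'))`, so the common factor cancels
and the Neumann–Poincaré kernel is `sinh 2ρ₀ / (2 Ξ(ω) (cosh 2ρ₀ - cos (ω + ω')))`, also on the
diagonal. Up to the factor `1 / (2 Ξ(ω))` this is the Poisson kernel of the unit disc at
`w = e^{-2ρ₀} e^{-iω}`, evaluated at `e^{iω'}`. Since `sin (nω') = Im (e^{iω'})ⁿ` and `z ↦ zⁿ` is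
holomorphic, the Poisson integral formula gives `∫ … sin (nω') dω' = 2π Im wⁿ = -2π e^{-2nρ₀} sin (nω)`.
-/

open Real

lemma cosh_sub_cos_ne_zero {ρ : ℝ} (hρ : ρ ≠ 0) (v : ℝ) : cosh ρ - cos v ≠ 0 :=
  (sub_pos.2 ((cos_le_one v).trans_lt (one_lt_cosh.2 hρ))).ne'

lemma poissonKernel_circleMap_exp_neg (b ω θ : ℝ) :
    poissonKernel 0 (circleMap 0 (rexp (-b)) (-ω)) (circleMap 0 1 θ) =
      sinh b / (cosh b - cos (ω + θ)) := by
  set r := rexp (-b) with hr_def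
  have hr : r ≠ 0 := (exp_pos _).ne'
  have hexp : rexp b = r⁻¹ := by rw [hr_def, exp_neg, inv_inv]
  have hsinh : sinh b = (1 - r ^ 2) / (2 * r) := by
    rw [sinh_eq, hexp, ← hr_def]
    field_simp
  have hcosh : cosh b - cos (ω + θ) = (1 + r ^ 2 - 2 * r * cos (ω + θ)) / (2 * r) := by
    rw [cosh_eq, hexp, ← hr_def]
    field_simp
  have hdist : ‖circleMap 0 1 θ - 0 - (circleMap 0 r (-ω) - 0)‖ ^ 2
      = 1 + r ^ 2 - 2 * r * cos (ω + θ) := by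
    simp only [sub_zero, Complex.sq_norm, Complex.normSq_apply, circleMap_zero, Complex.sub_re,
      Complex.sub_im, Complex.re_ofReal_mul, Complex.im_ofReal_mul, Complex.exp_ofReal_mul_I_re,
      Complex.exp_ofReal_mul_I_im, cos_neg, sin_neg, cos_add]
    linear_combination cos_sq_add_sin_sq θ + r ^ 2 * cos_sq_add_sin_sq ω
  rw [poissonKernel_def, hdist, hsinh, hcosh, div_div_div_cancel_right₀ (by positivity)]
  simp only [sub_zero, norm_circleMap_zero, abs_one, one_pow, sq_abs]

lemma im_circleMap_zero_pow (R θ : ℝ) (n : ℕ) :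
    (circleMap 0 R θ ^ n).im = R ^ n * sin (n * θ) := by
  rw [circleMap_zero, mul_pow, ← Complex.ofReal_pow, ← Complex.exp_nat_mul,
    show (n : ℂ) * (θ * Complex.I) = ((n * θ : ℝ) : ℂ) * Complex.I by push_cast; ring,
    Complex.im_ofReal_mul, Complex.exp_ofReal_mul_I_im]

lemma integral_sinh_div_cosh_sub_cos_mul_sin {b : ℝ} (hb : 0 < b) (n : ℕ) (ω : ℝ) :
    ∫ θ in 0..2 * π, sinh b / (cosh b - cos (ω + θ)) * sin (n * θ) =
      -(2 * π * rexp (-b) ^ n * sin (n * ω)) := by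
  have hw : circleMap 0 (rexp (-b)) (-ω) ∈ Metric.ball 0 1 := by
    simpa [norm_circleMap_zero] using exp_lt_one_iff.2 (neg_lt_zero.2 hb)
  have hpoisson := ((differentiable_pow n).diffContOnCl
    (s := Metric.ball (0 : ℂ) 1)).circleAverage_poissonKernel_smul hw
  simp only [circleAverage_def, Pi.smul_apply', poissonKernel_circleMap_exp_neg] at hpoisson
  have hint : IntervalIntegrable (fun θ : ℝ => (sinh b / (cosh b - cos (ω + θ))) •
      circleMap 0 1 θ ^ n) MeasureTheory.volume 0 (2 * π) := by
    have hP : Continuous fun θ => sinh b / (cosh b - cos (ω + θ)) :=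
      continuous_const.div (by fun_prop) fun θ => cosh_sub_cos_ne_zero hb.ne' _
    exact (hP.smul (by fun_prop)).intervalIntegrable _ _
  have him := congrArg Complex.im hpoisson
  rw [Complex.smul_im, ← Complex.imCLM_apply,
    ← ContinuousLinearMap.intervalIntegral_comp_comm _ hint] at him
  simp only [Complex.imCLM_apply, Complex.smul_im, im_circleMap_zero_pow, one_pow, one_mul,
    smul_eq_mul, mul_neg, sin_neg] at him
  rw [inv_mul_eq_iff_eq_mul₀ (by positivity)] at him
  rw [him]
  ring

lemma ellipse_chord_sq (R ρ ω ω' : ℝ) :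
    (R * cos ω * cosh ρ - R * cos ω' * cosh ρ) ^ 2 + (R * sin ω * sinh ρ - R * sin ω' * sinh ρ) ^ 2
      = R ^ 2 * (1 - cos (ω - ω')) * (cosh (2 * ρ) - cos (ω + ω')) := by
  rw [cos_sub, cos_add, cosh_two_mul]
  linear_combination -R ^ 2 * ((cos ω * cos ω' - sin ω * sin ω' + sin ω ^ 2 + sin ω' ^ 2 - 1) *
    cosh_sq_sub_sinh_sq ρ + (cos ω' ^ 2 - cosh ρ ^ 2) * cos_sq_add_sin_sq ω +
    (1 - sin ω ^ 2 - cosh ρ ^ 2) * cos_sq_add_sin_sq ω')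

lemma ellipse_chord_inner_normal (R ρ ω ω' : ℝ) :
    (R * cos ω * cosh ρ - R * cos ω' * cosh ρ) * (R * cos ω * sinh ρ) +
      (R * sin ω * sinh ρ - R * sin ω' * sinh ρ) * (R * sin ω * cosh ρ)
      = R ^ 2 * (sinh (2 * ρ) / 2) * (1 - cos (ω - ω')) := by
  rw [cos_sub, sinh_two_mul]
  linear_combination R ^ 2 * sinh ρ * cosh ρ * cos_sq_add_sin_sq ω

lemma ellipse_inner_normal (R ρ ω : ℝ) :
    R * cos ω * cosh ρ * (R * cos ω * sinh ρ) + R * sin ω * sinh ρ * (R * sin ω * cosh ρ)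
      = R ^ 2 * (sinh (2 * ρ) / 2) := by
  rw [sinh_two_mul]
  linear_combination R ^ 2 * sinh ρ * cosh ρ * cos_sq_add_sin_sq ω

lemma ellipse_speed_sq (R ρ ω : ℝ) :
    (R * √(sinh ρ ^ 2 + sin ω ^ 2)) ^ 2 = R ^ 2 * ((cosh (2 * ρ) - cos (2 * ω)) / 2) := by
  rw [mul_pow, sq_sqrt (by positivity), cosh_two_mul, cos_two_mul]
  linear_combination R ^ 2 * cos_sq_add_sin_sq ω - R ^ 2 / 2 * cosh_sq_sub_sinh_sq ρ

lemma ellipse_speed_ne_zero {R ρ : ℝ} (hR : R ≠ 0) (hρ : ρ ≠ 0) (ω : ℝ) :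
    R * √(sinh ρ ^ 2 + sin ω ^ 2) ≠ 0 :=
  mul_ne_zero hR (sqrt_ne_zero'.2 (add_pos_of_pos_of_nonneg
    (sq_pos_of_ne_zero (sinh_ne_zero.2 hρ)) (sq_nonneg _)))

lemma ellipse_neumannPoincare_kernel_eq {R ρ : ℝ} (hR : R ≠ 0) (hρ : ρ ≠ 0) {x₁ x₂ Ξ ν₁ ν₂ : ℝ → ℝ}
    (hx₁ : x₁ = fun ω => R * cos ω * cosh ρ)
    (hx₂ : x₂ = fun ω => R * sin ω * sinh ρ)
    (hΞ : Ξ = fun ω => R * √(sinh ρ ^ 2 + sin ω ^ 2))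
    (hν₁ : ν₁ = fun ω => R * cos ω * sinh ρ / Ξ ω)
    (hν₂ : ν₂ = fun ω => R * sin ω * cosh ρ / Ξ ω)
    {K : ℝ → ℝ → ℝ}
    (hK : K = fun ω ω' =>
      if (x₁ ω', x₂ ω') = (x₁ ω, x₂ ω) then
        (x₁ ω * ν₁ ω + x₂ ω * ν₂ ω) / (2 * (Ξ ω) ^ 2)
      else
        ((x₁ ω - x₁ ω') * ν₁ ω + (x₂ ω - x₂ ω') * ν₂ ω) /
          ((x₁ ω - x₁ ω') ^ 2 + (x₂ ω - x₂ ω') ^ 2)) (ω ω' : ℝ) :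
    K ω ω' = sinh (2 * ρ) / (2 * Ξ ω * (cosh (2 * ρ) - cos (ω + ω'))) := by
  have h2ρ : 2 * ρ ≠ 0 := mul_ne_zero two_ne_zero hρ
  have hΞsq : Ξ ω ^ 2 = R ^ 2 * ((cosh (2 * ρ) - cos (2 * ω)) / 2) := hΞ ▸ ellipse_speed_sq R ρ ω
  have hΞ0 : Ξ ω ≠ 0 := hΞ ▸ ellipse_speed_ne_zero hR hρ ω
  subst hK hx₁ hx₂ hν₁ hν₂
  dsimp only
  split_ifs with hdiag
  · simp only [Prod.mk.injEq] at hdiag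
    have hc : cos ω' = cos ω := mul_left_cancel₀ hR (mul_right_cancel₀ (cosh_pos ρ).ne' hdiag.1)
    have hs : sin ω' = sin ω := mul_left_cancel₀ hR (mul_right_cancel₀ (sinh_ne_zero.2 hρ) hdiag.2)
    have hcos : cos (ω + ω') = cos (2 * ω) := by
      rw [cos_add, hc, hs, cos_two_mul]
      linear_combination -cos_sq_add_sin_sq ω
    have hnum : R * cos ω * cosh ρ * (R * cos ω * sinh ρ / Ξ ω)
        + R * sin ω * sinh ρ * (R * sin ω * cosh ρ / Ξ ω) = R ^ 2 * (sinh (2 * ρ) / 2) / Ξ ω := by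
      rw [← ellipse_inner_normal]
      ring
    rw [hnum, hΞsq, hcos]
    field_simp [cosh_sub_cos_ne_zero h2ρ]
  · have hchord : (R * cos ω * cosh ρ - R * cos ω' * cosh ρ) ^ 2
        + (R * sin ω * sinh ρ - R * sin ω' * sinh ρ) ^ 2 ≠ 0 := by
      contrapose! hdiag
      obtain ⟨h1, h2⟩ := (add_eq_zero_iff_of_nonneg (sq_nonneg _) (sq_nonneg _)).1 hdiag
      rw [sq_eq_zero_iff, sub_eq_zero] at h1 h2
      rw [h1, h2]
    have hnum : (R * cos ω * cosh ρ - R * cos ω' * cosh ρ) * (R * cos ω * sinh ρ / Ξ ω)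
        + (R * sin ω * sinh ρ - R * sin ω' * sinh ρ) * (R * sin ω * cosh ρ / Ξ ω)
        = R ^ 2 * (sinh (2 * ρ) / 2) * (1 - cos (ω - ω')) / Ξ ω := by
      rw [← ellipse_chord_inner_normal]
      ring
    rw [ellipse_chord_sq] at hchord ⊢
    obtain ⟨-, hcos⟩ := mul_ne_zero_iff.1 (left_ne_zero_of_mul hchord)
    rw [hnum]
    field_simp [hcos, cosh_sub_cos_ne_zero h2ρ]

/-- For every integer n ≥ 1 and every ω ∈ [0, 2π), the density
φ_{2,n}(ω′) = sin(nω′)/Ξ(ω′) is a Neumann–Poincaré eigenfunction of the ellipse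
with eigenvalue −aₙ = −1/(2 e^{2nρ₀}); explicitly
(1/2π) ∫₀^{2π} (⟨x(ω)−x(ω′), ν(ω)⟩/|x(ω)−x(ω′)|²) sin(nω′) dω′
  = −sin(nω)/(2 e^{2nρ₀} Ξ(ω)). -/
theorem NP_eigenfunction_ellipse_sin (R₀ ρ₀ : ℝ) (hR : 0 < R₀) (hρ : 0 < ρ₀)
    (x₁ x₂ Ξ ν₁ ν₂ : ℝ → ℝ)
    (hx₁ : x₁ = fun ω => R₀ * Real.cos ω * Real.cosh ρ₀)
    (hx₂ : x₂ = fun ω => R₀ * Real.sin ω * Real.sinh ρ₀)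
    (hΞ : Ξ = fun ω => R₀ * Real.sqrt ((Real.sinh ρ₀) ^ 2 + (Real.sin ω) ^ 2))
    (hν₁ : ν₁ = fun ω => R₀ * Real.cos ω * Real.sinh ρ₀ / Ξ ω)
    (hν₂ : ν₂ = fun ω => R₀ * Real.sin ω * Real.cosh ρ₀ / Ξ ω)
    -- the Neumann–Poincaré kernel of the ellipse, extended at the removable
    -- singularity ω′ = ω by its limiting value −⟨x″(ω), ν(ω)⟩/(2|x′(ω)|²),
    -- where x″(ω) = −x(ω)
    (K : ℝ → ℝ → ℝ)
    (hK : K = fun ω ω' =>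
      if (x₁ ω', x₂ ω') = (x₁ ω, x₂ ω) then
        (x₁ ω * ν₁ ω + x₂ ω * ν₂ ω) / (2 * (Ξ ω) ^ 2)
      else
        ((x₁ ω - x₁ ω') * ν₁ ω + (x₂ ω - x₂ ω') * ν₂ ω) /
          ((x₁ ω - x₁ ω') ^ 2 + (x₂ ω - x₂ ω') ^ 2)) :
    ∀ n : ℕ, 1 ≤ n → ∀ ω ∈ Set.Ico (0 : ℝ) (2 * Real.pi),
      (1 / (2 * Real.pi)) *
          ∫ ω' in (0 : ℝ)..(2 * Real.pi), K ω ω' * Real.sin ((n : ℝ) * ω')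
        = -(Real.sin ((n : ℝ) * ω) / (2 * Real.exp (2 * (n : ℝ) * ρ₀) * Ξ ω)) := by
  intro n _ ω _
  have hkernel := ellipse_neumannPoincare_kernel_eq hR.ne' hρ.ne' hx₁ hx₂ hΞ hν₁ hν₂ hK ω
  have hΞ0 : Ξ ω ≠ 0 := hΞ ▸ ellipse_speed_ne_zero hR.ne' hρ.ne' ω
  have hexp : rexp (-(2 * ρ₀)) ^ n = (rexp (2 * n * ρ₀))⁻¹ := by
    rw [← exp_nat_mul, ← exp_neg]
    ring_nf
  calc (1 / (2 * π)) * ∫ ω' in (0 : ℝ)..(2 * π), K ω ω' * sin (n * ω')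
      = (1 / (2 * π)) * ((2 * Ξ ω)⁻¹ * ∫ ω' in (0 : ℝ)..(2 * π),
          sinh (2 * ρ₀) / (cosh (2 * ρ₀) - cos (ω + ω')) * sin (n * ω')) := by
        congr 1
        rw [← intervalIntegral.integral_const_mul]
        refine intervalIntegral.integral_congr fun ω' _ => ?_
        rw [hkernel, mul_inv, div_mul_eq_div_div]
        ring
    _ = -(sin (n * ω) / (2 * rexp (2 * n * ρ₀) * Ξ ω)) := by
        rw [integral_sinh_div_cosh_sub_cos_mul_sin (by positivity), hexp]
        field_simp
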